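/- ψ is increasing within character ranges: with notation as in the CSA, if T[A[i]] = T[A[j]] and i < j then ψ(i) < ψ(j). Hence ψ restricted to the interval of suffixes beginning with any fixed character c is strictly increasing. -/
import Mathlib


/-- ψ is increasing within first-character ranges: with `A` the suffix array of a
text `T` of length `n+1` ending in a unique minimal sentinel (at the last position),
and `ψ i = A⁻¹(A i + 1)` (cyclic), if the suffixes at ranks `i < j` begin with the
same character then `ψ i < ψ j`. -/
theorem stmt17 {α : Type} [LinearOrder α] {n : ℕ} (T : Fin (n + 1) → α)
    (A : Equiv.Perm (Fin (n + 1)))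
    (hsorted : ∀ i j : Fin (n + 1), i < j →
      List.Lex (· < ·) ((List.ofFn T).drop (A i : ℕ)) ((List.ofFn T).drop (A j : ℕ)))
    (hsent : ∀ p : Fin (n + 1), p ≠ Fin.last n → T (Fin.last n) < T p) :
    ∀ i j : Fin (n + 1), T (A i) = T (A j) → i < j →
      A.symm (A i + 1) < A.symm (A j + 1) := by
  intro i j hTeq hij
  have hAne : A i ≠ A j := fun h => absurd (A.injective h) (ne_of_lt hij)
  have hjlast : A j ≠ Fin.last n := by
    intro h
    have h2 := hsent (A i) (by rw [h] at hAne; exact hAne)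
    rw [← h, hTeq] at h2
    exact lt_irrefl _ h2
  have hilast : A i ≠ Fin.last n := by
    intro h
    have h2 := hsent (A j) (fun h' => hAne (h.trans h'.symm))
    rw [← h, ← hTeq] at h2
    exact lt_irrefl _ h2
  have hi1 : ((A i + 1 : Fin (n+1)) : ℕ) = (A i : ℕ) + 1 := by
    rw [Fin.val_add_one]; simp [hilast]
  have hj1 : ((A j + 1 : Fin (n+1)) : ℕ) = (A j : ℕ) + 1 := by
    rw [Fin.val_add_one]; simp [hjlast]
  have hdrop : ∀ p : Fin (n+1),
      (List.ofFn T).drop (p : ℕ) = T p :: (List.ofFn T).drop ((p : ℕ) + 1) := by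
    intro p
    rw [List.drop_eq_getElem_cons (by simp [p.isLt])]
    rw [List.getElem_ofFn]
  have hlex := hsorted i j hij
  rw [hdrop (A i), hdrop (A j), hTeq] at hlex
  have htail : List.Lex (· < ·) ((List.ofFn T).drop ((A i : ℕ) + 1))
      ((List.ofFn T).drop ((A j : ℕ) + 1)) := by
    cases hlex with
    | cons h => exact h
    | rel h => exact absurd h (lt_irrefl _)
  have hne : A.symm (A i + 1) ≠ A.symm (A j + 1) := by
    intro h
    apply hAne
    have := A.symm.injective h
    exact add_right_cancel this
  rcases lt_trichotomy (A.symm (A i + 1)) (A.symm (A j + 1)) with h | h | h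
  · exact h
  · exact absurd h hne
  · have hlex2 := hsorted _ _ h
    rw [Equiv.apply_symm_apply, Equiv.apply_symm_apply, hi1, hj1] at hlex2
    exact absurd htail (asymm hlex2)
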